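/- arXiv:1002.0619 — 2 statements merged into one kernel-verified Lean document; each statement's English description precedes it below -/
import Mathlib

section
/- Let m ∈ ℤ₂ with m ≡ 1 (mod 8) and √m the square root of m with √m ≡ 1 (mod 4). Let a, b ∈ ℚ₂, and choose the sign ± so that ord₂(a ± b) = min(ord₂(a + b), ord₂(a − b)). Then (a ± b√m)/(a ± b) is an odd 2-adic unit congruent to 1 mod 2ℤ₂ such that the Hilbert symbol (a ± b√m, 5)₂ equals (a ± b, 5)₂. -/
/-!
For `c ∈ ℚ₂`, `(c, 5)₂ = 1` exactly when `ord₂ c` is even, i.e. when `‖c‖` is the square of a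
norm. Indeed the values `z² - 5y²` of the norm form of the unramified extension `ℚ₂(√5)` have even
valuation: for units `z, y` one has `z² - 5y² ≡ 1 - 5 (mod 8)` because odd squares are `1 mod 8`.
Conversely, for a unit `u` the number `4u + 5 ≡ 1 (mod 8)` is a square `w²` by Hensel's lemma,
so `w² - 5 = 4u` represents `u` up to squares.

Writing `√m = 1 + 4t`, we get `a ± b√m = (a ± b)(1 + 2 · (2b / (a ± b)) · t)`, and `2b / (a ± b)` is
integral because `2b = (a ± b) - (a ∓ b)` and `ord₂(a ± b)` is the smaller valuation. So the
two numbers differ by a unit and have the same Hilbert symbol with `5`.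
-/

/-- The Hilbert symbol at 2 equals `1`, expressed by the solvability of
`z² = a x² + b y²` nontrivially over `ℚ₂`. -/
def Hilbert2One (a b : ℚ_[2]) : Prop :=
  ∃ x y z : ℚ_[2], (x ≠ 0 ∨ y ≠ 0 ∨ z ≠ 0) ∧ z ^ 2 = a * x ^ 2 + b * y ^ 2

namespace PadicInt

@[simp, norm_cast]
lemma coe_ofNat {p : ℕ} [Fact p.Prime] (n : ℕ) [n.AtLeastTwo] :
    ((ofNat(n) : ℤ_[p]) : ℚ_[p]) = ofNat(n) :=
  rfl

lemma norm_two : ‖(2 : ℤ_[2])‖ = 1 / 2 := by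
  simpa using norm_p (p := 2)

lemma eight_dvd_iff_toZModPow_three (x : ℤ_[2]) : 8 ∣ x ↔ toZModPow 3 x = 0 := by
  rw [← RingHom.mem_ker, ker_toZModPow, Ideal.mem_span_singleton]
  norm_num

lemma norm_le_one_div_eight_iff (x : ℤ_[2]) : ‖x‖ ≤ 1 / 8 ↔ 8 ∣ x := by
  have := norm_le_pow_iff_mem_span_pow x 3
  norm_num [Ideal.mem_span_singleton] at this
  exact this

lemma eight_dvd_sq_sub_one {u : ℤ_[2]} (hu : IsUnit u) : 8 ∣ u ^ 2 - 1 := by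
  rw [eight_dvd_iff_toZModPow_three, map_sub, map_pow, map_one]
  have := hu.map (toZModPow 3)
  revert this
  generalize toZModPow 3 u = v
  revert v
  decide

lemma eight_dvd_four_mul_add_four {u : ℤ_[2]} (hu : IsUnit u) : 8 ∣ 4 * u + 4 := by
  rw [eight_dvd_iff_toZModPow_three, map_add, map_mul, map_ofNat]
  have := hu.map (toZModPow 3)
  revert this
  generalize toZModPow 3 u = v
  revert v
  decide

open Polynomial in
lemma isSquare_of_eight_dvd_sub_one {u : ℤ_[2]} (h : 8 ∣ u - 1) : IsSquare u := by
  have hnorm : ‖(X ^ 2 - C u).aeval (1 : ℤ_[2])‖ <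
      ‖(X ^ 2 - C u).derivative.aeval (1 : ℤ_[2])‖ ^ 2 := by
    have h8 : ‖1 - u‖ ≤ 1 / 8 := by rwa [norm_le_one_div_eight_iff, ← dvd_neg, neg_sub]
    simp only [aeval_sub, aeval_X_pow, aeval_C, Algebra.algebraMap_self, RingHom.id_apply, one_pow,
      derivative_sub, derivative_X_pow, derivative_C, sub_zero, map_mul, map_natCast]
    norm_num [norm_two]
    linarith
  obtain ⟨w, hw, -⟩ := hensels_lemma hnorm
  exact ⟨w, by simpa [sub_eq_zero, sq, eq_comm] using hw⟩

lemma norm_sq_sub_five {q : ℤ_[2]} (hq : IsUnit q) : ‖q ^ 2 - 5‖ = 1 / 4 := by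
  have h4 : ‖(-4 : ℤ_[2])‖ = 1 / 4 := by
    rw [norm_neg, show (4 : ℤ_[2]) = 2 ^ 2 by norm_num, norm_pow, norm_two]
    norm_num
  have h8 : ‖q ^ 2 - 1‖ ≤ 1 / 8 := (norm_le_one_div_eight_iff _).2 (eight_dvd_sq_sub_one hq)
  rw [show q ^ 2 - 5 = (q ^ 2 - 1) + -4 by ring, IsUltrametricDist.norm_add_eq_max_of_norm_ne_norm,
    h4, max_eq_right] <;> linarith

end PadicInt

namespace Padic

lemma norm_le_norm_of_valuation_le {p : ℕ} [Fact p.Prime] {x y : ℚ_[p]} (hx : x ≠ 0)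
    (h : y = 0 ∨ x.valuation ≤ y.valuation) : ‖y‖ ≤ ‖x‖ := by
  rcases h with rfl | h
  · simp
  · rcases eq_or_ne y 0 with rfl | hy
    · simp
    rw [norm_eq_zpow_neg_valuation hx, norm_eq_zpow_neg_valuation hy]
    exact zpow_le_zpow_right₀ (by exact_mod_cast (Fact.out : p.Prime).one_le) (neg_le_neg h)

lemma norm_two : ‖(2 : ℚ_[2])‖ = 1 / 2 := by
  simpa using norm_p (p := 2)

lemma norm_five : ‖(5 : ℚ_[2])‖ = 1 := by
  simpa using (norm_natCast_eq_one_iff (p := 2) (n := 5)).2 (by decide)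

lemma norm_sq_sub_five_of_norm_eq_one {q : ℚ_[2]} (hq : ‖q‖ = 1) : ‖q ^ 2 - 5‖ = 1 / 4 := by
  have := PadicInt.norm_sq_sub_five (q := ⟨q, hq.le⟩) (PadicInt.isUnit_iff.2 hq)
  rwa [PadicInt.norm_def] at this

lemma not_isSquare_five : ¬ IsSquare (5 : ℚ_[2]) := by
  rintro ⟨q, hq⟩
  have hq1 : ‖q‖ = 1 := by
    have := congrArg norm hq
    rw [norm_five, norm_mul] at this
    nlinarith [norm_nonneg q]
  have := norm_sq_sub_five_of_norm_eq_one hq1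
  rw [hq, sq, sub_self, norm_zero] at this
  norm_num at this

lemma exists_norm_sq_sub_five_eq_sq (q : ℚ_[2]) : ∃ d : ℚ_[2], ‖q ^ 2 - 5‖ = ‖d‖ ^ 2 := by
  rcases eq_or_ne ‖q‖ 1 with hq | hq
  · exact ⟨2, by rw [norm_sq_sub_five_of_norm_eq_one hq, norm_two]; norm_num⟩
  have hmax : ‖q ^ 2 - 5‖ = max (‖q‖ ^ 2) 1 := by
    rw [sub_eq_add_neg, IsUltrametricDist.norm_add_eq_max_of_norm_ne_norm] <;>
      simp [norm_five, hq, pow_eq_one_iff_of_nonneg (norm_nonneg q)]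
  rcases hq.lt_or_gt with hlt | hgt
  · exact ⟨1, by rw [hmax, max_eq_right (by nlinarith [norm_nonneg q])]; simp⟩
  · exact ⟨q, by rw [hmax, max_eq_left (by nlinarith)]⟩

lemma exists_norm_sq_sub_five_mul_sq_eq_sq (z y : ℚ_[2]) :
    ∃ d : ℚ_[2], ‖z ^ 2 - 5 * y ^ 2‖ = ‖d‖ ^ 2 := by
  rcases eq_or_ne y 0 with rfl | hy
  · exact ⟨z, by simp⟩
  obtain ⟨d, hd⟩ := exists_norm_sq_sub_five_eq_sq (z / y)
  refine ⟨y * d, ?_⟩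
  rw [show z ^ 2 - 5 * y ^ 2 = y ^ 2 * ((z / y) ^ 2 - 5) by field_simp, norm_mul, norm_pow, hd,
    norm_mul, mul_pow]

lemma norm_one_add_two_mul (w : ℤ_[2]) : ‖1 + 2 * (w : ℚ_[2])‖ = 1 := by
  have h : ‖2 * (w : ℚ_[2])‖ < 1 := by
    rw [norm_mul, norm_two, PadicInt.padic_norm_e_of_padicInt]
    linarith [PadicInt.norm_le_one w]
  rw [IsUltrametricDist.norm_add_eq_max_of_norm_ne_norm] <;> simp only [norm_one] <;>
    [exact max_eq_left h.le; exact h.ne']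

lemma exists_add_mul_eq_mul_one_add_two_mul {a b : ℚ_[2]} {s : ℤ_[2]} (hab : a + b ≠ 0)
    (hle : ‖a - b‖ ≤ ‖a + b‖) (hs : 4 ∣ s - 1) :
    ∃ w : ℤ_[2], a + b * s = (a + b) * (1 + 2 * (w : ℚ_[2])) := by
  obtain ⟨t, ht⟩ := hs
  have hst : (s : ℚ_[2]) = 1 + 4 * t := by
    have := congrArg ((↑) : ℤ_[2] → ℚ_[2]) ht
    push_cast at this
    linear_combination this
  have hg_le : ‖2 * b / (a + b)‖ ≤ 1 := by
    rw [norm_div, div_le_one (norm_pos_iff.2 hab), show 2 * b = (a + b) + -(a - b) by ring]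
    exact (IsUltrametricDist.norm_add_le_max _ _).trans (by rw [norm_neg]; exact max_le le_rfl hle)
  obtain ⟨g, hg⟩ : ∃ g : ℤ_[2], (g : ℚ_[2]) = 2 * b / (a + b) := ⟨⟨_, hg_le⟩, rfl⟩
  refine ⟨g * t, ?_⟩
  rw [PadicInt.coe_mul, hst, hg]
  field_simp
  ring

end Padic

open Padic

theorem hilbert2One_five_iff (c : ℚ_[2]) : Hilbert2One c 5 ↔ ∃ d : ℚ_[2], ‖c‖ = ‖d‖ ^ 2 := by
  constructor
  · rintro ⟨x, y, z, hxyz, h⟩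
    rcases eq_or_ne x 0 with rfl | hx
    · have hy : y ≠ 0 := by
        rintro rfl
        simp_all
      exact (not_isSquare_five ⟨z / y, by field_simp; linear_combination h.symm⟩).elim
    obtain ⟨d, hd⟩ := exists_norm_sq_sub_five_mul_sq_eq_sq z y
    refine ⟨d / x, ?_⟩
    rw [norm_div, div_pow, eq_div_iff (by positivity), ← hd, ← norm_pow, ← norm_mul]
    congr 1
    linear_combination -h
  · rintro ⟨d, hd⟩
    rcases eq_or_ne d 0 with rfl | hd0
    · exact ⟨1, 0, 0, by simp, by simp_all⟩
    have hu : ‖c / d ^ 2‖ = 1 := by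
      rw [norm_div, norm_pow, hd, div_self (by positivity)]
    obtain ⟨u, hcu⟩ : ∃ u : ℤ_[2], (u : ℚ_[2]) = c / d ^ 2 := ⟨⟨_, hu.le⟩, rfl⟩
    have hunit : IsUnit u := PadicInt.isUnit_iff.2 (by rwa [PadicInt.norm_def, hcu])
    obtain ⟨w, hw⟩ := PadicInt.isSquare_of_eight_dvd_sub_one (u := 4 * u + 5)
      (by convert PadicInt.eight_dvd_four_mul_add_four hunit using 1; ring)
    refine ⟨2 / d, 1, w, by simp [hd0], ?_⟩
    have := congrArg ((↑) : ℤ_[2] → ℚ_[2]) hw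
    push_cast [hcu] at this
    linear_combination -this

theorem hilbert_sqrt_approx_five_general (s : ℤ_[2]) (hs4 : (4 : ℤ_[2]) ∣ (s - 1))
    (a b ε : ℚ_[2])
    (hne : a + ε * b ≠ 0)
    (hmin : a - ε * b = 0 ∨ (a + ε * b).valuation ≤ (a - ε * b).valuation) :
    (∃ w : ℤ_[2],
        a + ε * b * (s : ℚ_[2]) = (a + ε * b) * (1 + 2 * (w : ℚ_[2]))) ∧
    (Hilbert2One (a + ε * b * (s : ℚ_[2])) 5 ↔ Hilbert2One (a + ε * b) 5) := by
  obtain ⟨w, hw⟩ :=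
    exists_add_mul_eq_mul_one_add_two_mul hne (norm_le_norm_of_valuation_le hne hmin) hs4
  refine ⟨⟨w, hw⟩, ?_⟩
  rw [hw, hilbert2One_five_iff, hilbert2One_five_iff, norm_mul, norm_one_add_two_mul, mul_one]

/-- let `m = 1 + 8x ∈ ℤ₂`, `s = √m` the square root with `s ≡ 1 (mod 4)`.
For `a, b ∈ ℚ₂` and a sign `ε = ±1` chosen so that `ord₂(a + εb)` is minimal among
`ord₂(a ± b)`, the quotient `(a + εbs)/(a + εb)` is an odd 2-adic unit (≡ 1 mod 2ℤ₂),
and the Hilbert symbols `(a + εbs, 5)₂` and `(a + εb, 5)₂` agree. -/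
theorem hilbert_sqrt_approx_five (m x s : ℤ_[2]) (hm : m = 1 + 8 * x)
    (hs : s ^ 2 = m) (hs4 : (4 : ℤ_[2]) ∣ (s - 1))
    (a b ε : ℚ_[2]) (hε : ε = 1 ∨ ε = -1)
    (hne : a + ε * b ≠ 0)
    (hmin : a - ε * b = 0 ∨ (a + ε * b).valuation ≤ (a - ε * b).valuation) :
    (∃ w : ℤ_[2],
        a + ε * b * (s : ℚ_[2]) = (a + ε * b) * (1 + 2 * (w : ℚ_[2]))) ∧
    (Hilbert2One (a + ε * b * (s : ℚ_[2])) 5 ↔ Hilbert2One (a + ε * b) 5) :=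
  hilbert_sqrt_approx_five_general s hs4 a b ε hne hmin
end

section
/- Let p ≡ 1 (mod 8) be prime. Then ((1 + √2)/p) = (2/p)₄·(p/2)₄, where √2 is a square root of 2 mod p, (2/p)₄ = 2^((p−1)/4) mod p ∈ {±1}, and (p/2)₄ is defined to be 1 if p ≡ 1 (mod 16) and −1 if p ≡ 9 (mod 16). -/
/-- The rational quartic residue symbol `(m/p)₄ = m^((p−1)/4) mod p`, recorded as an
integer: it is `1` or `−1` when `m^((p−1)/4) = ±1` in `ZMod p`, and `0` otherwise. -/
def quarticSym (p : ℕ) (m : ℤ) : ℤ :=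
  if (m : ZMod p) ^ ((p - 1) / 4) = 1 then 1
  else if (m : ZMod p) ^ ((p - 1) / 4) = -1 then -1 else 0

/-!
Pick `ζ` with `ζ⁴ = -1`; after replacing `ζ` by `-ζ` if necessary, `√2 = ζ + ζ⁻¹`. Then
`√2 (1 + √2) = 2 + √2 = ζ (1 + ζ⁻¹)²`, so `((1 + √2)/p) = (√2/p) (ζ/p)`. By Euler's
criterion `(√2/p) = √2 ^ ((p - 1) / 2) = 2 ^ ((p - 1) / 4)`, and
`(ζ/p) = ζ ^ ((p - 1) / 2) = (-1) ^ ((p - 1) / 8)`, which is `1` exactly when `p ≡ 1 (mod 16)`.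
-/

section FiniteField

variable {F : Type*} [Field F] [Fintype F]

theorem FiniteField.exists_pow_four_eq_neg_one (h : 8 ∣ Fintype.card F - 1) :
    ∃ ζ : F, ζ ^ 4 = -1 := by
  classical
  obtain ⟨g, hg⟩ := IsCyclic.exists_ofOrder_eq_natCard (α := Fˣ)
  rw [Nat.card_eq_fintype_card, Fintype.card_units] at hg
  have hg0 : orderOf g ≠ 0 := by have := Fintype.one_lt_card (α := F); omega
  have hprim := IsPrimitiveRoot.orderOf (g ^ (orderOf g / 8))
  rw [orderOf_pow_orderOf_div hg0 (hg ▸ h)] at hprim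
  exact ⟨_, ((IsPrimitiveRoot.coe_units_iff.mpr hprim).pow_of_dvd (by norm_num)
    (by norm_num : 4 ∣ 8)).eq_neg_one_of_two_right⟩

end FiniteField

section Field

variable {F : Type*} [Field F] {ζ σ : F}

theorem ne_zero_of_pow_four_eq_neg_one (hζ : ζ ^ 4 = -1) : ζ ≠ 0 := by
  rintro rfl; norm_num at hζ

theorem ne_zero_of_sq_eq_two (hF : ringChar F ≠ 2) (hσ : σ ^ 2 = 2) : σ ≠ 0 := by
  rintro rfl
  exact Ring.two_ne_zero hF (by rw [← hσ]; ring)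

theorem add_inv_sq_of_pow_four_eq_neg_one (hζ : ζ ^ 4 = -1) : (ζ + ζ⁻¹) ^ 2 = 2 := by
  have := ne_zero_of_pow_four_eq_neg_one hζ
  field_simp
  linear_combination hζ

theorem exists_add_inv_eq_of_sq_eq_two (hζ : ζ ^ 4 = -1) (hσ : σ ^ 2 = 2) :
    ∃ ξ : F, ξ ^ 4 = -1 ∧ ξ + ξ⁻¹ = σ := by
  rcases sq_eq_sq_iff_eq_or_eq_neg.mp ((add_inv_sq_of_pow_four_eq_neg_one hζ).trans hσ.symm)
    with h | h
  · exact ⟨ζ, hζ, h⟩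
  · exact ⟨-ζ, by linear_combination hζ, by rw [inv_neg]; linear_combination -h⟩

end Field

section QuadraticChar

variable {F : Type*} [Field F] [Fintype F] [DecidableEq F] {ζ : F}

theorem quadraticChar_one_add_add_inv (hF : ringChar F ≠ 2) (hζ : ζ ^ 4 = -1) :
    quadraticChar F (1 + (ζ + ζ⁻¹)) = quadraticChar F (ζ + ζ⁻¹) * quadraticChar F ζ := by
  have hζ0 := ne_zero_of_pow_four_eq_neg_one hζ
  have hσ := add_inv_sq_of_pow_four_eq_neg_one hζ
  have hσ0 := ne_zero_of_sq_eq_two hF hσ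
  have h1ζ : 1 + ζ⁻¹ ≠ 0 := by
    intro h
    have hζ1 : ζ = -1 := by rw [← inv_inv ζ, eq_neg_of_add_eq_zero_right h, inv_neg_one]
    exact Ring.two_ne_zero hF (by rw [hζ1] at hζ; linear_combination hζ)
  have key : (ζ + ζ⁻¹) * (1 + (ζ + ζ⁻¹)) = ζ * (1 + ζ⁻¹) ^ 2 := by
    linear_combination hσ - (2 + ζ⁻¹) * mul_inv_cancel₀ hζ0
  have hmul := congrArg (quadraticChar F) key
  rw [map_mul, map_mul, map_pow, quadraticChar_sq_one h1ζ, mul_one] at hmul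
  calc _ = quadraticChar F (ζ + ζ⁻¹) ^ 2 * quadraticChar F (1 + (ζ + ζ⁻¹)) := by
        rw [quadraticChar_sq_one hσ0, one_mul]
    _ = _ := by rw [← hmul]; ring

theorem quadraticChar_eq_of_pow_four_eq_neg_one (hF : Fintype.card F % 8 = 1)
    (hζ : ζ ^ 4 = -1) :
    quadraticChar F ζ = if Fintype.card F % 16 = 1 then 1 else -1 := by
  have hchar : ringChar F ≠ 2 := fun h => by
    have := FiniteField.even_card_iff_char_two.mp h; omega
  have hpow : ζ ^ (Fintype.card F / 2) = (-1) ^ (Fintype.card F / 8) := by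
    rw [show Fintype.card F / 2 = 4 * (Fintype.card F / 8) by omega, pow_mul, hζ]
  rw [quadraticChar_eq_pow_of_char_ne_two hchar (ne_zero_of_pow_four_eq_neg_one hζ), hpow]
  rcases (by omega : Fintype.card F % 16 = 1 ∨ Fintype.card F % 16 = 9) with h16 | h16
  · simp [(Nat.even_iff.mpr (by omega) : Even (Fintype.card F / 8)).neg_one_pow, h16]
  · simp [(Nat.odd_iff.mpr (by omega) : Odd (Fintype.card F / 8)).neg_one_pow, h16,
      Ring.neg_one_ne_one_of_char_ne_two hchar]

end QuadraticChar

theorem quarticSym_eq_quadraticChar {p : ℕ} [Fact p.Prime] (hp : p % 4 = 1) {m : ℤ}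
    {σ : ZMod p} (hσ : σ ^ 2 = m) (hσ0 : σ ≠ 0) :
    quarticSym p m = quadraticChar (ZMod p) σ := by
  have hchar : ringChar (ZMod p) ≠ 2 := by rw [ZMod.ringChar_zmod_n]; omega
  have euler : (m : ZMod p) ^ ((p - 1) / 4) = (quadraticChar (ZMod p) σ : ZMod p) := by
    rw [quadraticChar_eq_pow_of_char_ne_two' hchar, ZMod.card, ← hσ, ← pow_mul]
    congr 1; omega
  rw [quarticSym, euler]
  rcases quadraticChar_dichotomy hσ0 with h | h <;> rw [h]
  · simp
  · simp [Ring.neg_one_ne_one_of_char_ne_two hchar]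

/-- let `p ≡ 1 (mod 8)` be prime and `√2` a square root of `2` mod `p`.
Then `((1 + √2)/p) = (2/p)₄·(p/2)₄`, where `(p/2)₄ = 1` if `p ≡ 1 (mod 16)` and `−1`
if `p ≡ 9 (mod 16)`. -/
theorem scholz_two (p : ℕ) [Fact p.Prime] (hp : p % 8 = 1)
    (σ : ZMod p) (hσ : σ ^ 2 = 2) :
    quadraticChar (ZMod p) (1 + σ) =
      quarticSym p 2 * (if p % 16 = 1 then 1 else -1) := by
  have hchar : ringChar (ZMod p) ≠ 2 := by rw [ZMod.ringChar_zmod_n]; omega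
  obtain ⟨ζ₀, hζ₀⟩ := FiniteField.exists_pow_four_eq_neg_one (F := ZMod p) (by
    rw [ZMod.card]; omega)
  obtain ⟨ζ, hζ, rfl⟩ := exists_add_inv_eq_of_sq_eq_two hζ₀ hσ
  rw [quadraticChar_one_add_add_inv hchar hζ,
    quarticSym_eq_quadraticChar (by omega) (by rw [hσ]; norm_num) (ne_zero_of_sq_eq_two hchar hσ),
    quadraticChar_eq_of_pow_four_eq_neg_one (by rwa [ZMod.card]) hζ, ZMod.card]
end
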